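/- arXiv:1410.2989 — 7 statements merged into one kernel-verified Lean document; each statement's English description precedes it below -/
import Mathlib

section
/- Let A, B ∈ ℝ^{n×n} be symmetric matrices and suppose the block matrix [[A, B], [B, −A]] has the spectral decomposition [[A, B], [B, −A]] = U · diag(Θ, −Θ) · Uᵀ, where U ∈ ℝ^{2n×2n} is orthogonal and Θ = diag(θ₁, θ₂, …, θ_n) with θ₁ ≥ θ₂ ≥ … ≥ θ_n ≥ 0. If for every j ∈ {1, …, n} the columns of U satisfy u_{n+j} = [[0, −I_n], [I_n, 0]] · u_j (where u_k denotes the k-th column of U), then [[B, −A], [−A, −B]] = U · [[0, −Θ], [−Θ, 0]] · Uᵀ. -/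
open Matrix

/-! Write `J = [[0, -I], [I, 0]]`. The column hypothesis says `U J = J U`; transposing, and using
`Jᵀ = -J`, also `Uᵀ J = J Uᵀ`. Since `[[A, B], [B, -A]] J = [[B, -A], [-A, -B]]`, the claim is
`U D Uᵀ J = U (D J) Uᵀ` with `D = diag(Θ, -Θ)`, and `D J = [[0, -Θ], [-Θ, 0]]`. -/

protected theorem Commute.transpose {m R : Type*} [Fintype m] [CommSemiring R]
    {M N : Matrix m m R} (h : Commute M N) : Commute Mᵀ Nᵀ := by
  rw [Commute, SemiconjBy, ← transpose_mul, ← transpose_mul, h.eq]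

namespace Matrix

variable {l R : Type*} [DecidableEq l] [Fintype l] [CommRing R]

theorem fromBlocks_mul_J (A B C D : Matrix l l R) :
    fromBlocks A B C D * J l R = fromBlocks B (-A) D (-C) := by
  simp [J, fromBlocks_multiply]

theorem commute_J_of_toCols₂_eq_J_mul_toCols₁ {U : Matrix (l ⊕ l) (l ⊕ l) R}
    (h : U.toCols₂ = J l R * U.toCols₁) : Commute (J l R) U := by
  rw [Commute, SemiconjBy, ← fromCols_toCols U, mul_fromCols, J, fromCols_mul_fromBlocks, ← J, h,
    ← Matrix.mul_assoc, J_squared]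
  simp

end Matrix

theorem stmt2_general {n : ℕ} (A B : Matrix (Fin n) (Fin n) ℝ)
    (U : Matrix (Fin n ⊕ Fin n) (Fin n ⊕ Fin n) ℝ)
    (θ : Fin n → ℝ)
    (hspec : Matrix.fromBlocks A B B (-A) =
      U * Matrix.fromBlocks (Matrix.diagonal θ) 0 0 (-(Matrix.diagonal θ)) * Uᵀ)
    (hcol : ∀ j : Fin n, (fun i => U i (Sum.inr j)) =
      (Matrix.fromBlocks (0 : Matrix (Fin n) (Fin n) ℝ) (-1) 1 0).mulVec
        (fun i => U i (Sum.inl j))) :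
    Matrix.fromBlocks B (-A) (-A) (-B) =
      U * Matrix.fromBlocks 0 (-(Matrix.diagonal θ)) (-(Matrix.diagonal θ)) 0 * Uᵀ := by
  have hJU : Commute (J (Fin n) ℝ) U := by
    refine commute_J_of_toCols₂_eq_J_mul_toCols₁ (ext fun i j => ?_)
    exact congrFun (hcol j) i
  have hJUt : Commute (J (Fin n) ℝ) Uᵀ := by
    simpa using hJU.transpose
  calc fromBlocks B (-A) (-A) (-B) = fromBlocks A B B (-A) * J (Fin n) ℝ := by
        rw [fromBlocks_mul_J]
    _ = U * (fromBlocks (diagonal θ) 0 0 (-diagonal θ) * J (Fin n) ℝ) * Uᵀ := by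
        rw [hspec, Matrix.mul_assoc _ Uᵀ, ← hJUt.eq, ← Matrix.mul_assoc, Matrix.mul_assoc U]
    _ = U * fromBlocks 0 (-diagonal θ) (-diagonal θ) 0 * Uᵀ := by
        rw [fromBlocks_mul_J, neg_zero]

/-- Property of two Hamiltonian systems: if `[[A, B], [B, −A]] = U · diag(Θ, −Θ) · Uᵀ` is a
spectral decomposition with `U` orthogonal, `Θ = diag(θ₁ ≥ … ≥ θ_n ≥ 0)`, and the columns of `U`
satisfy `u_{n+j} = [[0, −I], [I, 0]] u_j`, then
`[[B, −A], [−A, −B]] = U · [[0, −Θ], [−Θ, 0]] · Uᵀ`. -/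
theorem stmt2 {n : ℕ} (A B : Matrix (Fin n) (Fin n) ℝ)
    (hA : A.IsSymm) (hB : B.IsSymm)
    (U : Matrix (Fin n ⊕ Fin n) (Fin n ⊕ Fin n) ℝ)
    (hU : Uᵀ * U = 1) (hU' : U * Uᵀ = 1)
    (θ : Fin n → ℝ) (hmono : Antitone θ) (hnonneg : ∀ i, 0 ≤ θ i)
    (hspec : Matrix.fromBlocks A B B (-A) =
      U * Matrix.fromBlocks (Matrix.diagonal θ) 0 0 (-(Matrix.diagonal θ)) * Uᵀ)
    (hcol : ∀ j : Fin n, (fun i => U i (Sum.inr j)) =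
      (Matrix.fromBlocks (0 : Matrix (Fin n) (Fin n) ℝ) (-1) 1 0).mulVec
        (fun i => U i (Sum.inl j))) :
    Matrix.fromBlocks B (-A) (-A) (-B) =
      U * Matrix.fromBlocks 0 (-(Matrix.diagonal θ)) (-(Matrix.diagonal θ)) 0 * Uᵀ :=
  stmt2_general A B U θ hspec hcol
end

section
/- Let S₁ ∈ ℂ^{n×r} and S₂ ∈ ℂ^{j×r} satisfy S₁*S₁ + S₂*S₂ = I_r. Let σ₁ > 0 be the largest singular value of S₁ and let v ∈ ℂ^r be a unit vector with S₁*S₁v = σ₁²v. Set z = S₁v/σ₁ ∈ ℂ^n (so ‖z‖₂ = 1) and w = S₂v/σ₁ ∈ ℂ^j. Assume Re(z) and Im(z) are linearly independent over ℝ, and let (c, s) be the Jacobi rotation parameters for the pair (Re(z), Im(z)). Define x₁ = c·Re(z) − s·Im(z), x₂ = s·Re(z) + c·Im(z), v₁ = c·Re(w) − s·Im(w), v₂ = s·Re(w) + c·Im(w), and let δ₁ = 1/‖x₁‖₂, δ₂ = 1/‖x₂‖₂, δ = δ₂/δ₁. Then x₁ᵀx₂ = 0, and for every β ∈ ℝ: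 δ₁²‖v₁‖₂² + δ₂²‖v₂‖₂² + β²(δ − 1/δ)² ≤ (1/min{‖x₁‖₂², ‖x₂‖₂²}) · ((1 − σ₁²)/σ₁² + β²). -/
open Matrix

/-- The Jacobi rotation parameter `t` for a pair of real vectors `x, y` (used when `xᵀy ≠ 0`):
`τ = (‖y‖² − ‖x‖²)/(2 xᵀy)`, `t = 1/(τ + √(1+τ²))` if `τ ≥ 0`,
`t = −1/(−τ + √(1+τ²))` if `τ < 0`. -/
noncomputable def jacobiT {n : ℕ} (x y : Fin n → ℝ) : ℝ :=
  let τ : ℝ := (y ⬝ᵥ y - x ⬝ᵥ x) / (2 * (x ⬝ᵥ y))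
  if 0 ≤ τ then 1 / (τ + Real.sqrt (1 + τ ^ 2)) else -1 / (-τ + Real.sqrt (1 + τ ^ 2))

/-- The Jacobi rotation cosine: `c = 1` if `xᵀy = 0`, otherwise `c = 1/√(1+t²)`. -/
noncomputable def jacobiC {n : ℕ} (x y : Fin n → ℝ) : ℝ :=
  if x ⬝ᵥ y = 0 then 1 else 1 / Real.sqrt (1 + (jacobiT x y) ^ 2)

/-- The Jacobi rotation sine: `s = 0` if `xᵀy = 0`, otherwise `s = t·c`. -/
noncomputable def jacobiS {n : ℕ} (x y : Fin n → ℝ) : ℝ :=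
  if x ⬝ᵥ y = 0 then 0 else jacobiT x y * jacobiC x y

/-! Since `S₁ᴴS₁ + S₂ᴴS₂ = 1`, the vector `v` is also an eigenvector of `S₂ᴴS₂`, with eigenvalue
`1 - σ₁²`; hence `‖z‖² = 1` and `‖w‖² = (1 - σ₁²)/σ₁²`. A plane rotation preserves
`‖p‖² + ‖q‖²`, so `a = ‖x₁‖²` and `b = ‖x₂‖²` satisfy `a + b = 1` and
`‖v₁‖² + ‖v₂‖² = ‖w‖²`, while the Jacobi angle makes `x₁ ⊥ x₂`; linear independence of
`Re z, Im z` gives `a, b > 0`. The objective is `‖v₁‖²/a + ‖v₂‖²/b + β²(a - b)²/(ab)`, and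
`(a - b)² ≤ |a - b| ≤ max a b` bounds its last term by `β²/min a b`. -/


section Ordered

variable {ι K : Type*} [Fintype ι] [Ring K] [LinearOrder K] [IsStrictOrderedRing K]

lemma dotProduct_self_nonneg (v : ι → K) : 0 ≤ v ⬝ᵥ v :=
  Finset.sum_nonneg fun i _ => mul_self_nonneg (v i)

lemma dotProduct_self_pos {v : ι → K} (hv : v ≠ 0) : 0 < v ⬝ᵥ v :=
  (dotProduct_self_nonneg v).lt_of_ne (Ne.symm (dotProduct_self_eq_zero.not.2 hv))

end Ordered

section Rotation

variable {ι R : Type*} [Fintype ι] [CommRing R]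

lemma rotate_dotProduct_self_add_rotate_dotProduct_self {c s : R} (h : c ^ 2 + s ^ 2 = 1)
    (p q : ι → R) :
    (c • p - s • q) ⬝ᵥ (c • p - s • q) + (s • p + c • q) ⬝ᵥ (s • p + c • q)
      = p ⬝ᵥ p + q ⬝ᵥ q := by
  simp only [sub_dotProduct, dotProduct_sub, add_dotProduct, dotProduct_add,
    smul_dotProduct, dotProduct_smul, smul_eq_mul, dotProduct_comm q p]
  linear_combination (p ⬝ᵥ p + q ⬝ᵥ q) * h

lemma rotate_dotProduct_rotate (c s : R) (p q : ι → R) :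
    (c • p - s • q) ⬝ᵥ (s • p + c • q)
      = c * s * (p ⬝ᵥ p - q ⬝ᵥ q) + (c ^ 2 - s ^ 2) * (p ⬝ᵥ q) := by
  simp only [sub_dotProduct, dotProduct_add,
    smul_dotProduct, dotProduct_smul, smul_eq_mul, dotProduct_comm q p]
  ring

lemma rotate_ne_zero_of_linearIndependent {K V : Type*} [Ring K] [LinearOrder K]
    [IsStrictOrderedRing K] [AddCommGroup V] [Module K V] {p q : V}
    (hpq : LinearIndependent K ![p, q]) {c s : K} (h : c ^ 2 + s ^ 2 = 1) :
    c • p - s • q ≠ 0 ∧ s • p + c • q ≠ 0 := by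
  rw [LinearIndependent.pair_iff] at hpq
  constructor
  · intro h0
    obtain ⟨rfl, hs⟩ := hpq c (-s) (by rwa [neg_smul, ← sub_eq_add_neg])
    simp [neg_eq_zero.1 hs] at h
  · intro h0
    obtain ⟨rfl, rfl⟩ := hpq s c h0
    simp at h

end Rotation

section Jacobi

variable {n : ℕ} (x y : Fin n → ℝ)

lemma jacobiT_sq_add_two_mul_sub_one_eq_zero :
    jacobiT x y ^ 2 + 2 * ((y ⬝ᵥ y - x ⬝ᵥ x) / (2 * (x ⬝ᵥ y))) * jacobiT x y - 1 = 0 := by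
  rw [jacobiT]
  generalize (y ⬝ᵥ y - x ⬝ᵥ x) / (2 * (x ⬝ᵥ y)) = τ
  have hsq : √(1 + τ ^ 2) ^ 2 = 1 + τ ^ 2 := Real.sq_sqrt (by positivity)
  have hpos : 0 < √(1 + τ ^ 2) := Real.sqrt_pos.2 (by positivity)
  split_ifs with hτ
  · have : 0 < τ + √(1 + τ ^ 2) := by positivity
    field_simp
    nlinarith
  · have : 0 < -τ + √(1 + τ ^ 2) := by linarith
    field_simp
    nlinarith

lemma jacobiC_sq_add_jacobiS_sq : jacobiC x y ^ 2 + jacobiS x y ^ 2 = 1 := by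
  by_cases h : x ⬝ᵥ y = 0
  · simp [jacobiC, jacobiS, h]
  · simp only [jacobiC, jacobiS, if_neg h]
    have hpos : (0 : ℝ) < 1 + jacobiT x y ^ 2 := by positivity
    field_simp
    rw [Real.sq_sqrt hpos.le]

lemma jacobi_rotate_dotProduct_rotate_eq_zero :
    (jacobiC x y • x - jacobiS x y • y) ⬝ᵥ (jacobiS x y • x + jacobiC x y • y) = 0 := by
  rw [rotate_dotProduct_rotate]
  by_cases h : x ⬝ᵥ y = 0
  · simp [jacobiC, jacobiS, h]
  · have hquad := jacobiT_sq_add_two_mul_sub_one_eq_zero x y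
    simp only [jacobiC, jacobiS, if_neg h]
    set t := jacobiT x y
    have hpos : (0 : ℝ) < 1 + t ^ 2 := by positivity
    -- with `s = t c`, the rotated inner product is `-c²` times the quadratic satisfied by `t`
    field_simp at hquad ⊢
    linear_combination -hquad

end Jacobi

section Eigenvector

variable {m k R : Type*} [Fintype m] [Fintype k] [CommRing R] [StarRing R]

lemma star_mulVec_dotProduct_mulVec_of_eigen (A : Matrix m k R) {v : k → R} {μ : R}
    (h : (Aᴴ * A) *ᵥ v = μ • v) :
    star (A *ᵥ v) ⬝ᵥ A *ᵥ v = μ * (star v ⬝ᵥ v) := by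
  rw [star_mulVec, ← dotProduct_mulVec, mulVec_mulVec, h, dotProduct_smul, smul_eq_mul]

lemma conjTranspose_mul_self_mulVec_of_add_eq_one [DecidableEq k] {m' : Type*} [Fintype m']
    {A : Matrix m k R} {B : Matrix m' k R}
    (hAB : Aᴴ * A + Bᴴ * B = 1) {v : k → R} {μ : R} (h : (Aᴴ * A) *ᵥ v = μ • v) :
    (Bᴴ * B) *ᵥ v = (1 - μ) • v := by
  rw [eq_sub_of_add_eq' hAB, sub_mulVec, one_mulVec, h, sub_smul, one_smul]

end Eigenvector

section Complex

variable {m k : Type*} [Fintype m] [Fintype k]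

lemma re_star_dotProduct_self (u : m → ℂ) :
    (star u ⬝ᵥ u).re
      = (fun i => (u i).re) ⬝ᵥ (fun i => (u i).re)
        + (fun i => (u i).im) ⬝ᵥ (fun i => (u i).im) := by
  simp only [dotProduct, Pi.star_apply, RCLike.star_def, Complex.re_sum, Complex.mul_re,
    Complex.conj_re, Complex.conj_im, ← Finset.sum_add_distrib]
  exact Finset.sum_congr rfl fun i _ => by ring

lemma re_dotProduct_self_add_im_dotProduct_self_of_eigen (A : Matrix m k ℂ) {v : k → ℂ}
    (hv : star v ⬝ᵥ v = 1) {μ : ℝ} (h : (Aᴴ * A) *ᵥ v = (μ : ℂ) • v) (a : ℝ) :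
    (fun i => (((a : ℂ) • A *ᵥ v) i).re) ⬝ᵥ (fun i => (((a : ℂ) • A *ᵥ v) i).re)
      + (fun i => (((a : ℂ) • A *ᵥ v) i).im) ⬝ᵥ (fun i => (((a : ℂ) • A *ᵥ v) i).im)
      = a ^ 2 * μ := by
  rw [← re_star_dotProduct_self, star_smul, smul_dotProduct, dotProduct_smul,
    star_mulVec_dotProduct_mulVec_of_eigen A h, hv]
  simp only [RCLike.star_def, Complex.conj_ofReal, smul_eq_mul, mul_one]
  norm_cast
  ring

end Complex

section Scalar

variable {a b : ℝ}

lemma sq_sub_div_mul_le_one_div_min (ha : 0 < a) (hb : 0 < b) (hab : a + b ≤ 1) :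
    (a - b) ^ 2 / (a * b) ≤ 1 / min a b := by
  have habs : |a - b| ≤ max a b := abs_sub_le_iff.2
    ⟨by linarith [le_max_left a b], by linarith [le_max_right a b]⟩
  have hle : |a - b| ≤ 1 := abs_sub_le_iff.2 ⟨by linarith, by linarith⟩
  have hsq : (a - b) ^ 2 ≤ |a - b| := by
    rw [← sq_abs, sq]
    exact mul_le_of_le_one_right (abs_nonneg _) hle
  calc (a - b) ^ 2 / (a * b) ≤ max a b / (min a b * max a b) := by
        rw [min_mul_max]; gcongr; linarith
    _ = 1 / min a b := by
        have : 0 < max a b := lt_max_of_lt_left ha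
        field_simp

lemma div_add_div_le_div_min {p q : ℝ} (hp : 0 ≤ p) (hq : 0 ≤ q) (ha : 0 < a) (hb : 0 < b) :
    p / a + q / b ≤ (p + q) / min a b := by
  have hmin : 0 < min a b := lt_min ha hb
  rw [add_div]
  gcongr
  exacts [min_le_left a b, min_le_right a b]

lemma sqrt_div_sqrt_sub_one_div_sq (ha : 0 < a) (hb : 0 < b) :
    (√a / √b - 1 / (√a / √b)) ^ 2 = (a - b) ^ 2 / (a * b) := by
  have ha' : 0 < √a := Real.sqrt_pos.2 ha
  have hb' : 0 < √b := Real.sqrt_pos.2 hb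
  field_simp
  rw [Real.sq_sqrt ha.le, Real.sq_sqrt hb.le]
  ring

lemma one_div_sqrt_sq_mul_add_add_mul_ratio_sub_inv_sq_le {p q : ℝ} (ha : 0 < a) (hb : 0 < b)
    (hab : a + b ≤ 1) (hp : 0 ≤ p) (hq : 0 ≤ q) (β : ℝ) :
    (1 / √a) ^ 2 * p + (1 / √b) ^ 2 * q
        + β ^ 2 * ((1 / √b) / (1 / √a) - 1 / ((1 / √b) / (1 / √a))) ^ 2
      ≤ 1 / min a b * (p + q + β ^ 2) := by
  have hratio : (1 / √b) / (1 / √a) = √a / √b := div_div_div_cancel_left' _ _ one_ne_zero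
  rw [hratio, sqrt_div_sqrt_sub_one_div_sq ha hb, div_pow, div_pow, one_pow,
    Real.sq_sqrt ha.le, Real.sq_sqrt hb.le, one_div_mul_eq_div, one_div_mul_eq_div]
  calc p / a + q / b + β ^ 2 * ((a - b) ^ 2 / (a * b))
      ≤ (p + q) / min a b + β ^ 2 * (1 / min a b) :=
        add_le_add (div_add_div_le_div_min hp hq ha hb)
          (mul_le_mul_of_nonneg_left (sq_sub_div_mul_le_one_div_min ha hb hab) (sq_nonneg β))
    _ = 1 / min a b * (p + q + β ^ 2) := by ring

end Scalar

theorem stmt6_general {n j r : ℕ}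
    (S₁ : Matrix (Fin n) (Fin r) ℂ) (S₂ : Matrix (Fin j) (Fin r) ℂ)
    (hS : S₁ᴴ * S₁ + S₂ᴴ * S₂ = 1)
    (σ₁ : ℝ) (hσ : 0 < σ₁)
    (v : Fin r → ℂ) (hv : star v ⬝ᵥ v = 1)
    (heig : (S₁ᴴ * S₁).mulVec v = ((σ₁ ^ 2 : ℝ) : ℂ) • v)
    (z : Fin n → ℂ) (hz : z = ((σ₁⁻¹ : ℝ) : ℂ) • S₁.mulVec v)
    (w : Fin j → ℂ) (hw : w = ((σ₁⁻¹ : ℝ) : ℂ) • S₂.mulVec v)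
    (xr xi : Fin n → ℝ)
    (hxr : xr = fun i => (z i).re) (hxi : xi = fun i => (z i).im)
    (hind : LinearIndependent ℝ ![xr, xi])
    (c s : ℝ) (hc : c = jacobiC xr xi) (hs : s = jacobiS xr xi)
    (x₁ x₂ : Fin n → ℝ)
    (hx₁ : x₁ = c • xr - s • xi) (hx₂ : x₂ = s • xr + c • xi)
    (v₁ v₂ : Fin j → ℝ)
    (hv₁ : v₁ = c • (fun i => (w i).re) - s • (fun i => (w i).im))
    (hv₂ : v₂ = s • (fun i => (w i).re) + c • (fun i => (w i).im))
    (δ₁ δ₂ δ : ℝ)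
    (hδ₁ : δ₁ = 1 / Real.sqrt (x₁ ⬝ᵥ x₁))
    (hδ₂ : δ₂ = 1 / Real.sqrt (x₂ ⬝ᵥ x₂))
    (hδ : δ = δ₂ / δ₁) :
    x₁ ⬝ᵥ x₂ = 0 ∧
    ∀ β : ℝ,
      δ₁ ^ 2 * (v₁ ⬝ᵥ v₁) + δ₂ ^ 2 * (v₂ ⬝ᵥ v₂) + β ^ 2 * (δ - 1 / δ) ^ 2 ≤
        (1 / min (x₁ ⬝ᵥ x₁) (x₂ ⬝ᵥ x₂)) * ((1 - σ₁ ^ 2) / σ₁ ^ 2 + β ^ 2) := by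
  have hcs : c ^ 2 + s ^ 2 = 1 := hc ▸ hs ▸ jacobiC_sq_add_jacobiS_sq xr xi
  have hz1 : xr ⬝ᵥ xr + xi ⬝ᵥ xi = 1 := by
    rw [hxr, hxi, hz, re_dotProduct_self_add_im_dotProduct_self_of_eigen S₁ hv heig]
    field_simp
  have hw1 : (fun i => (w i).re) ⬝ᵥ (fun i => (w i).re)
      + (fun i => (w i).im) ⬝ᵥ (fun i => (w i).im) = (1 - σ₁ ^ 2) / σ₁ ^ 2 := by
    have heig₂ := conjTranspose_mul_self_mulVec_of_add_eq_one hS heig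
    rw [hw, re_dotProduct_self_add_im_dotProduct_self_of_eigen S₂ hv (μ := 1 - σ₁ ^ 2)
      (mod_cast heig₂)]
    field_simp
  obtain ⟨hx₁0, hx₂0⟩ := rotate_ne_zero_of_linearIndependent hind hcs
  have hab : x₁ ⬝ᵥ x₁ + x₂ ⬝ᵥ x₂ = 1 := by
    rw [hx₁, hx₂, rotate_dotProduct_self_add_rotate_dotProduct_self hcs, hz1]
  have hv12 : v₁ ⬝ᵥ v₁ + v₂ ⬝ᵥ v₂ = (1 - σ₁ ^ 2) / σ₁ ^ 2 := by
    rw [hv₁, hv₂, rotate_dotProduct_self_add_rotate_dotProduct_self hcs, hw1]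
  refine ⟨by rw [hx₁, hx₂, hc, hs]; exact jacobi_rotate_dotProduct_rotate_eq_zero xr xi,
    fun β => ?_⟩
  rw [hδ, hδ₁, hδ₂, ← hv12]
  exact one_div_sqrt_sq_mul_add_add_mul_ratio_sub_inv_sq_le (dotProduct_self_pos (hx₁ ▸ hx₁0))
    (dotProduct_self_pos (hx₂ ▸ hx₂0)) hab.le (dotProduct_self_nonneg _)
    (dotProduct_self_nonneg _) β

/-- Suboptimal strategy via the top singular vector: the Jacobi-rotated vectors
`x₁, x₂` are orthogonal and the objective value is at most
`(1/min{‖x₁‖², ‖x₂‖²})·((1 − σ₁²)/σ₁² + β²)`. -/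
theorem stmt6 {n j r : ℕ}
    (S₁ : Matrix (Fin n) (Fin r) ℂ) (S₂ : Matrix (Fin j) (Fin r) ℂ)
    (hS : S₁ᴴ * S₁ + S₂ᴴ * S₂ = 1)
    (σ₁ : ℝ) (hσ : 0 < σ₁)
    (hmax : ∀ b : Fin r → ℂ,
      (star (S₁.mulVec b) ⬝ᵥ S₁.mulVec b).re ≤ σ₁ ^ 2 * (star b ⬝ᵥ b).re)
    (v : Fin r → ℂ) (hv : star v ⬝ᵥ v = 1)
    (heig : (S₁ᴴ * S₁).mulVec v = ((σ₁ ^ 2 : ℝ) : ℂ) • v)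
    (z : Fin n → ℂ) (hz : z = ((σ₁⁻¹ : ℝ) : ℂ) • S₁.mulVec v)
    (w : Fin j → ℂ) (hw : w = ((σ₁⁻¹ : ℝ) : ℂ) • S₂.mulVec v)
    (xr xi : Fin n → ℝ)
    (hxr : xr = fun i => (z i).re) (hxi : xi = fun i => (z i).im)
    (hind : LinearIndependent ℝ ![xr, xi])
    (c s : ℝ) (hc : c = jacobiC xr xi) (hs : s = jacobiS xr xi)
    (x₁ x₂ : Fin n → ℝ)
    (hx₁ : x₁ = c • xr - s • xi) (hx₂ : x₂ = s • xr + c • xi)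
    (v₁ v₂ : Fin j → ℝ)
    (hv₁ : v₁ = c • (fun i => (w i).re) - s • (fun i => (w i).im))
    (hv₂ : v₂ = s • (fun i => (w i).re) + c • (fun i => (w i).im))
    (δ₁ δ₂ δ : ℝ)
    (hδ₁ : δ₁ = 1 / Real.sqrt (x₁ ⬝ᵥ x₁))
    (hδ₂ : δ₂ = 1 / Real.sqrt (x₂ ⬝ᵥ x₂))
    (hδ : δ = δ₂ / δ₁) :
    x₁ ⬝ᵥ x₂ = 0 ∧
    ∀ β : ℝ,
      δ₁ ^ 2 * (v₁ ⬝ᵥ v₁) + δ₂ ^ 2 * (v₂ ⬝ᵥ v₂) + β ^ 2 * (δ - 1 / δ) ^ 2 ≤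
        (1 / min (x₁ ⬝ᵥ x₁) (x₂ ⬝ᵥ x₂)) * ((1 - σ₁ ^ 2) / σ₁ ^ 2 + β ^ 2) :=
  stmt6_general S₁ S₂ hS σ₁ hσ v hv heig z hz w hw xr xi hxr hxi hind c s hc hs x₁ x₂ hx₁ hx₂ v₁ v₂
    hv₁ hv₂ δ₁ δ₂ δ hδ₁ hδ₂ hδ
end

section
/- Let S₁ ∈ ℂ^{n×r} and S₂ ∈ ℂ^{j×r} satisfy S₁*S₁ + S₂*S₂ = I_r. Let σ₁ ≥ σ₂ > 0 and let v₁, v₂ ∈ ℂ^r be orthonormal vectors with S₁*S₁v₁ = σ₁²v₁ and S₁*S₁v₂ = σ₂²v₂. Set z₁ = S₁v₁/σ₁, z₂ = S₁v₂/σ₂ ∈ ℂ^n and w₁ = S₂v₁/σ₁, w₂ = S₂v₂/σ₂ ∈ ℂ^j. Then there exist real numbers γ₁, γ₂, ζ₁, ζ₂ with γ₁² + γ₂² + ζ₁² + ζ₂² = 1 such that, setting z = (γ₁ + iζ₁)z₁ + (γ₂ + iζ₂)z₂ and w = (γ₁ + iζ₁)w₁ + (γ₂ + iζ₂)w₂,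 one has Re(z)ᵀIm(z) = 0, ‖Re(z)‖₂ = ‖Im(z)‖₂ = √2/2, and 2‖w‖₂² ≤ 2(1 − σ₂²)/σ₂². -/
/-!
Since `S₁ᴴS₁ + S₂ᴴS₂ = 1`, the vectors `z₁, z₂` are orthonormal and `w₁, w₂` are orthogonal with
`‖wₖ‖² = (1 - σₖ²)/σₖ²`. Over `ℂ` the quadratic form `(a, b) ↦ (a z₁ + b z₂) ⬝ᵥ (a z₁ + b z₂)` has a
nontrivial zero, which we normalise to `|a|² + |b|² = 1`. The resulting `z` satisfies `z ⬝ᵥ z = 0`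
and `z* z = 1`, i.e. its real and imaginary parts are orthogonal of norm `√2/2`, while
`‖w‖² = |a|²‖w₁‖² + |b|²‖w₂‖²` is a convex combination, bounded by the larger value `‖w₂‖²`.
-/

open Matrix

theorem Complex.exists_normSq_add_normSq_pos_and_quadratic_eq_zero (p q s : ℂ) :
    ∃ a b : ℂ, 0 < normSq a + normSq b ∧ p * a ^ 2 + 2 * q * a * b + s * b ^ 2 = 0 := by
  by_cases hp : p = 0
  · exact ⟨1, 0, by simp, by simp [hp]⟩
  -- with `c² = q² - ps`, `(c - q, p)` is a root
  obtain ⟨c, hc⟩ := IsAlgClosed.exists_pow_nat_eq (q ^ 2 - p * s) two_pos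
  exact ⟨c - q, p, add_pos_of_nonneg_of_pos (normSq_nonneg _) (normSq_pos.2 hp),
    by linear_combination p * hc⟩

theorem Complex.exists_normSq_add_normSq_eq_one_and_quadratic_eq_zero (p q s : ℂ) :
    ∃ a b : ℂ, normSq a + normSq b = 1 ∧ p * a ^ 2 + 2 * q * a * b + s * b ^ 2 = 0 := by
  obtain ⟨a, b, hab, hroot⟩ := exists_normSq_add_normSq_pos_and_quadratic_eq_zero p q s
  set N : ℝ := Real.sqrt (normSq a + normSq b)
  have hN : normSq (N : ℂ) = normSq a + normSq b := by
    rw [normSq_ofReal, Real.mul_self_sqrt hab.le]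
  have hN0 : (N : ℂ) ≠ 0 := by exact_mod_cast (Real.sqrt_pos.2 hab).ne'
  refine ⟨a / N, b / N, ?_, ?_⟩
  · rw [normSq_div, normSq_div, hN, ← add_div, div_self hab.ne']
  · field_simp
    linear_combination hroot

namespace Matrix

variable {ι m n k α : Type*} [Fintype ι] [Fintype m] [Fintype n] [Fintype k]

theorem star_mulVec_dotProduct_mulVec [NonUnitalSemiring α] [StarRing α]
    (S : Matrix m n α) (u v : n → α) :
    star (S *ᵥ u) ⬝ᵥ (S *ᵥ v) = star u ⬝ᵥ (Sᴴ * S) *ᵥ v := by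
  rw [star_mulVec, dotProduct_mulVec, dotProduct_mulVec, vecMul_vecMul]

theorem star_mulVec_dotProduct_mulVec_of_eigen [CommSemiring α] [StarRing α]
    {S : Matrix m n α} {v : n → α} {c : α} (hv : (Sᴴ * S) *ᵥ v = c • v) (u : n → α) :
    star (S *ᵥ u) ⬝ᵥ (S *ᵥ v) = c * (star u ⬝ᵥ v) := by
  rw [star_mulVec_dotProduct_mulVec, hv, dotProduct_smul, smul_eq_mul]

theorem star_mulVec_dotProduct_mulVec_of_add_eq_one [DecidableEq n] [CommRing α] [StarRing α]
    {S₁ : Matrix m n α} {S₂ : Matrix k n α} (hS : S₁ᴴ * S₁ + S₂ᴴ * S₂ = 1)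
    {v : n → α} {c : α} (hv : (S₁ᴴ * S₁) *ᵥ v = c • v) (u : n → α) :
    star (S₂ *ᵥ u) ⬝ᵥ (S₂ *ᵥ v) = (1 - c) * (star u ⬝ᵥ v) := by
  rw [star_mulVec_dotProduct_mulVec, eq_sub_of_add_eq' hS, sub_mulVec, one_mulVec, hv,
    dotProduct_sub, dotProduct_smul, smul_eq_mul]
  ring

theorem star_ofReal_smul_dotProduct_ofReal_smul (a b : ℝ) (x y : ι → ℂ) :
    star ((a : ℂ) • x) ⬝ᵥ ((b : ℂ) • y) = ((a * b : ℝ) : ℂ) * (star x ⬝ᵥ y) := by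
  rw [star_smul, smul_dotProduct, dotProduct_smul, smul_eq_mul, smul_eq_mul,
    Complex.star_def, Complex.conj_ofReal]
  push_cast
  ring

theorem star_ofReal_smul_mulVec_dotProduct_of_eigen {S : Matrix m n ℂ} {v : n → ℂ} {σ : ℝ}
    (hv : (Sᴴ * S) *ᵥ v = ((σ ^ 2 : ℝ) : ℂ) • v) (τ : ℝ) (u : n → ℂ) :
    star (((τ⁻¹ : ℝ) : ℂ) • S *ᵥ u) ⬝ᵥ (((σ⁻¹ : ℝ) : ℂ) • S *ᵥ v)
      = ((σ / τ : ℝ) : ℂ) * (star u ⬝ᵥ v) := by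
  rw [star_ofReal_smul_dotProduct_ofReal_smul, star_mulVec_dotProduct_mulVec_of_eigen hv,
    ← mul_assoc, ← Complex.ofReal_mul, show τ⁻¹ * σ⁻¹ * σ ^ 2 = τ⁻¹ * (σ⁻¹ * σ * σ) by ring,
    inv_mul_mul_self, div_eq_inv_mul]

theorem star_ofReal_smul_mulVec_dotProduct_of_add_eq_one [DecidableEq n]
    {S₁ : Matrix m n ℂ} {S₂ : Matrix k n ℂ} (hS : S₁ᴴ * S₁ + S₂ᴴ * S₂ = 1) {v : n → ℂ} {σ : ℝ}
    (hv : (S₁ᴴ * S₁) *ᵥ v = ((σ ^ 2 : ℝ) : ℂ) • v) (τ : ℝ) (u : n → ℂ) :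
    star (((τ⁻¹ : ℝ) : ℂ) • S₂ *ᵥ u) ⬝ᵥ (((σ⁻¹ : ℝ) : ℂ) • S₂ *ᵥ v)
      = (((1 - σ ^ 2) / (τ * σ) : ℝ) : ℂ) * (star u ⬝ᵥ v) := by
  rw [star_ofReal_smul_dotProduct_ofReal_smul, star_mulVec_dotProduct_mulVec_of_add_eq_one hS hv]
  push_cast
  ring

theorem star_add_dotProduct_add_of_orthogonal {x y : ι → ℂ} (hxy : star x ⬝ᵥ y = 0)
    (a b : ℂ) :
    star (a • x + b • y) ⬝ᵥ (a • x + b • y)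
      = Complex.normSq a * (star x ⬝ᵥ x) + Complex.normSq b * (star y ⬝ᵥ y) := by
  have hyx : star y ⬝ᵥ x = 0 := by rw [star_dotProduct, hxy, star_zero]
  simp only [star_add, star_smul, add_dotProduct, dotProduct_add, smul_dotProduct,
    dotProduct_smul, smul_eq_mul, hxy, hyx, Complex.star_def, mul_zero, add_zero, zero_add,
    ← mul_assoc, Complex.mul_conj]

theorem star_add_dotProduct_add_eq_one_of_orthonormal {x y : ι → ℂ} (hx : star x ⬝ᵥ x = 1)
    (hy : star y ⬝ᵥ y = 1) (hxy : star x ⬝ᵥ y = 0) {a b : ℂ}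
    (hab : Complex.normSq a + Complex.normSq b = 1) :
    star (a • x + b • y) ⬝ᵥ (a • x + b • y) = 1 := by
  rw [star_add_dotProduct_add_of_orthogonal hxy, hx, hy, mul_one, mul_one]
  exact_mod_cast hab

theorem re_star_add_dotProduct_add_le_of_orthogonal {x y : ι → ℂ} (hxy : star x ⬝ᵥ y = 0)
    {s t : ℝ} (hx : star x ⬝ᵥ x = s) (hy : star y ⬝ᵥ y = t) (hst : s ≤ t) {a b : ℂ}
    (hab : Complex.normSq a + Complex.normSq b = 1) :
    (star (a • x + b • y) ⬝ᵥ (a • x + b • y)).re ≤ t := by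
  rw [star_add_dotProduct_add_of_orthogonal hxy, hx, hy]
  norm_cast
  linear_combination mul_le_mul_of_nonneg_left hst (Complex.normSq_nonneg a) + t * hab

theorem re_dotProduct_im (z : ι → ℂ) :
    ((fun i => (z i).re) ⬝ᵥ fun i => (z i).im) = (z ⬝ᵥ z).im / 2 := by
  simp only [dotProduct, Complex.im_sum, Complex.mul_im, Finset.sum_div]
  exact Finset.sum_congr rfl fun i _ => by ring

theorem re_dotProduct_re (z : ι → ℂ) :
    ((fun i => (z i).re) ⬝ᵥ fun i => (z i).re) = ((star z ⬝ᵥ z).re + (z ⬝ᵥ z).re) / 2 := by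
  simp only [dotProduct, Complex.re_sum, Complex.mul_re, Pi.star_apply, Complex.star_def,
    Complex.conj_re, Complex.conj_im, ← Finset.sum_add_distrib, Finset.sum_div]
  exact Finset.sum_congr rfl fun i _ => by ring

theorem im_dotProduct_im (z : ι → ℂ) :
    ((fun i => (z i).im) ⬝ᵥ fun i => (z i).im) = ((star z ⬝ᵥ z).re - (z ⬝ᵥ z).re) / 2 := by
  simp only [dotProduct, Complex.re_sum, Complex.mul_re, Pi.star_apply, Complex.star_def,
    Complex.conj_re, Complex.conj_im, ← Finset.sum_sub_distrib, Finset.sum_div]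
  exact Finset.sum_congr rfl fun i _ => by ring

theorem re_im_of_isotropic_unit {z : ι → ℂ} (hzz : z ⬝ᵥ z = 0) (hz : star z ⬝ᵥ z = 1) :
    ((fun i => (z i).re) ⬝ᵥ fun i => (z i).im) = 0 ∧
    Real.sqrt ((fun i => (z i).re) ⬝ᵥ fun i => (z i).re) = Real.sqrt 2 / 2 ∧
    Real.sqrt ((fun i => (z i).im) ⬝ᵥ fun i => (z i).im) = Real.sqrt 2 / 2 := by
  have hhalf : Real.sqrt (1 / 2) = Real.sqrt 2 / 2 := by
    rw [Real.sqrt_div' _ (by norm_num), Real.sqrt_one, ← Real.sqrt_div_self']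
  rw [re_dotProduct_im, re_dotProduct_re, im_dotProduct_im, hzz, hz]
  norm_num [hhalf]

theorem exists_normSq_add_normSq_eq_one_and_isotropic (x y : ι → ℂ) :
    ∃ a b : ℂ, Complex.normSq a + Complex.normSq b = 1 ∧
      (a • x + b • y) ⬝ᵥ (a • x + b • y) = 0 := by
  obtain ⟨a, b, hab, hroot⟩ := Complex.exists_normSq_add_normSq_eq_one_and_quadratic_eq_zero
    (x ⬝ᵥ x) (x ⬝ᵥ y) (y ⬝ᵥ y)
  refine ⟨a, b, hab, ?_⟩
  simp only [add_dotProduct, dotProduct_add, smul_dotProduct, dotProduct_smul, smul_eq_mul,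
    dotProduct_comm y x]
  linear_combination hroot

end Matrix

theorem one_sub_sq_div_sq_le_of_le {s t : ℝ} (hs : 0 < s) (hst : s ≤ t) :
    (1 - t ^ 2) / t ^ 2 ≤ (1 - s ^ 2) / s ^ 2 := by
  have ht : 0 < t := hs.trans_le hst
  rw [sub_div, sub_div, div_self (by positivity), div_self (by positivity)]
  gcongr

/-- Suboptimal strategy via the two top singular vectors: there exist coefficients
`γ₁, γ₂, ζ₁, ζ₂` with `γ₁² + γ₂² + ζ₁² + ζ₂² = 1` such that for
`z = (γ₁ + iζ₁)z₁ + (γ₂ + iζ₂)z₂` and `w = (γ₁ + iζ₁)w₁ + (γ₂ + iζ₂)w₂`,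
one has `Re(z)ᵀIm(z) = 0`, `‖Re(z)‖ = ‖Im(z)‖ = √2/2`, and `2‖w‖² ≤ 2(1 − σ₂²)/σ₂²`. -/
theorem stmt7 {n j r : ℕ}
    (S₁ : Matrix (Fin n) (Fin r) ℂ) (S₂ : Matrix (Fin j) (Fin r) ℂ)
    (hS : S₁ᴴ * S₁ + S₂ᴴ * S₂ = 1)
    (σ₁ σ₂ : ℝ) (hσ₁₂ : σ₂ ≤ σ₁) (hσ₂ : 0 < σ₂)
    (v₁ v₂ : Fin r → ℂ)
    (hv₁ : star v₁ ⬝ᵥ v₁ = 1) (hv₂ : star v₂ ⬝ᵥ v₂ = 1) (hv₁₂ : star v₁ ⬝ᵥ v₂ = 0)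
    (heig₁ : (S₁ᴴ * S₁).mulVec v₁ = ((σ₁ ^ 2 : ℝ) : ℂ) • v₁)
    (heig₂ : (S₁ᴴ * S₁).mulVec v₂ = ((σ₂ ^ 2 : ℝ) : ℂ) • v₂)
    (z₁ z₂ : Fin n → ℂ)
    (hz₁ : z₁ = ((σ₁⁻¹ : ℝ) : ℂ) • S₁.mulVec v₁)
    (hz₂ : z₂ = ((σ₂⁻¹ : ℝ) : ℂ) • S₁.mulVec v₂)
    (w₁ w₂ : Fin j → ℂ)
    (hw₁ : w₁ = ((σ₁⁻¹ : ℝ) : ℂ) • S₂.mulVec v₁)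
    (hw₂ : w₂ = ((σ₂⁻¹ : ℝ) : ℂ) • S₂.mulVec v₂) :
    ∃ γ₁ γ₂ ζ₁ ζ₂ : ℝ,
      γ₁ ^ 2 + γ₂ ^ 2 + ζ₁ ^ 2 + ζ₂ ^ 2 = 1 ∧
      ∀ (z : Fin n → ℂ) (w : Fin j → ℂ),
        z = ((γ₁ : ℂ) + ζ₁ * Complex.I) • z₁ + ((γ₂ : ℂ) + ζ₂ * Complex.I) • z₂ →
        w = ((γ₁ : ℂ) + ζ₁ * Complex.I) • w₁ + ((γ₂ : ℂ) + ζ₂ * Complex.I) • w₂ →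
        ((fun i => (z i).re) ⬝ᵥ fun i => (z i).im) = 0 ∧
        Real.sqrt ((fun i => (z i).re) ⬝ᵥ fun i => (z i).re) = Real.sqrt 2 / 2 ∧
        Real.sqrt ((fun i => (z i).im) ⬝ᵥ fun i => (z i).im) = Real.sqrt 2 / 2 ∧
        2 * (star w ⬝ᵥ w).re ≤ 2 * (1 - σ₂ ^ 2) / σ₂ ^ 2 := by
  have hσ₁ : 0 < σ₁ := hσ₂.trans_le hσ₁₂
  have hz₁₁ : star z₁ ⬝ᵥ z₁ = 1 := by
    rw [hz₁, star_ofReal_smul_mulVec_dotProduct_of_eigen heig₁, hv₁, div_self hσ₁.ne',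
      Complex.ofReal_one, mul_one]
  have hz₂₂ : star z₂ ⬝ᵥ z₂ = 1 := by
    rw [hz₂, star_ofReal_smul_mulVec_dotProduct_of_eigen heig₂, hv₂, div_self hσ₂.ne',
      Complex.ofReal_one, mul_one]
  have hz₁₂ : star z₁ ⬝ᵥ z₂ = 0 := by
    rw [hz₁, hz₂, star_ofReal_smul_mulVec_dotProduct_of_eigen heig₂, hv₁₂, mul_zero]
  have hw₁₁ : star w₁ ⬝ᵥ w₁ = (((1 - σ₁ ^ 2) / σ₁ ^ 2 : ℝ) : ℂ) := by
    rw [hw₁, star_ofReal_smul_mulVec_dotProduct_of_add_eq_one hS heig₁, hv₁, mul_one, ← sq]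
  have hw₂₂ : star w₂ ⬝ᵥ w₂ = (((1 - σ₂ ^ 2) / σ₂ ^ 2 : ℝ) : ℂ) := by
    rw [hw₂, star_ofReal_smul_mulVec_dotProduct_of_add_eq_one hS heig₂, hv₂, mul_one, ← sq]
  have hw₁₂ : star w₁ ⬝ᵥ w₂ = 0 := by
    rw [hw₁, hw₂, star_ofReal_smul_mulVec_dotProduct_of_add_eq_one hS heig₂, hv₁₂, mul_zero]
  obtain ⟨a, b, hab, hiso⟩ := exists_normSq_add_normSq_eq_one_and_isotropic z₁ z₂
  refine ⟨a.re, b.re, a.im, b.im, ?_, ?_⟩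
  · rw [Complex.normSq_apply, Complex.normSq_apply] at hab
    linear_combination hab
  rintro z w rfl rfl
  simp only [Complex.re_add_im]
  obtain ⟨hreim, hre, him⟩ :=
    re_im_of_isotropic_unit hiso (star_add_dotProduct_add_eq_one_of_orthonormal hz₁₁ hz₂₂ hz₁₂ hab)
  refine ⟨hreim, hre, him, ?_⟩
  rw [mul_div_assoc]
  gcongr
  exact re_star_add_dotProduct_add_le_of_orthogonal hw₁₂ hw₁₁ hw₂₂
    (one_sub_sq_div_sq_le_of_le hσ₂ hσ₁₂) hab
end

section
/- Let φ₁ ≥ φ₂ ≥ 0 with φ₁ > 0, and let ν₂ ∈ ℝ satisfy ν₂² ≤ φ₁/(φ₁ + φ₂). Define μ₁ = −√(φ₂/φ₁)·ν₂, μ₂ = √(φ₁/(φ₁+φ₂) − ν₂²), and ν₁ = √(φ₂/(φ₁+φ₂) − (φ₂/φ₁)ν₂²). Then (μ₁, μ₂, ν₁, ν₂) satisfies the system: φ₁μ₁ν₁ + φ₂μ₂ν₂ = 0, φ₁(μ₁² − ν₁²) + φ₂(μ₂² − ν₂²) = 0, and μ₁² + μ₂² + ν₁² + ν₂² = 1.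 -/
/-!
With `r = √(φ₂/φ₁)` the quadruple is `(-r ν₂, μ₂, r μ₂, ν₂)`, and `φ₁ r² = φ₂`. This relation
alone makes the two quadratic equations polynomial identities in `μ₂, ν₂`, while the
normalisation reduces to `(1 + r²)(μ₂² + ν₂²) = 1`, i.e. to `μ₂² + ν₂² = φ₁ / (φ₁ + φ₂)`.
-/

section ScaledQuadruple

variable {φ₁ φ₂ r : ℝ}

theorem scaledQuadruple_cross_eq_zero (hr : φ₁ * r ^ 2 = φ₂) (μ ν : ℝ) :
    φ₁ * (-r * ν) * (r * μ) + φ₂ * μ * ν = 0 := by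
  linear_combination (-(μ * ν)) * hr

theorem scaledQuadruple_diff_eq_zero (hr : φ₁ * r ^ 2 = φ₂) (μ ν : ℝ) :
    φ₁ * ((-r * ν) ^ 2 - (r * μ) ^ 2) + φ₂ * (μ ^ 2 - ν ^ 2) = 0 := by
  linear_combination (ν ^ 2 - μ ^ 2) * hr

theorem scaledQuadruple_norm_eq_one (hr : φ₁ * r ^ 2 = φ₂) (hφ : φ₁ + φ₂ ≠ 0) {μ ν : ℝ}
    (hμν : μ ^ 2 + ν ^ 2 = φ₁ / (φ₁ + φ₂)) :
    (-r * ν) ^ 2 + μ ^ 2 + (r * μ) ^ 2 + ν ^ 2 = 1 := by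
  calc (-r * ν) ^ 2 + μ ^ 2 + (r * μ) ^ 2 + ν ^ 2 = (1 + r ^ 2) * (μ ^ 2 + ν ^ 2) := by ring
    _ = (φ₁ + φ₁ * r ^ 2) / (φ₁ + φ₂) := by rw [hμν]; ring
    _ = 1 := by rw [hr, div_self hφ]

end ScaledQuadruple

theorem stmt8_general (φ₁ φ₂ ν₂ : ℝ) (h2 : 0 ≤ φ₂) (h1 : 0 < φ₁)
    (hν₂ : ν₂ ^ 2 ≤ φ₁ / (φ₁ + φ₂))
    (μ₁ μ₂ ν₁ : ℝ)
    (hμ₁ : μ₁ = -Real.sqrt (φ₂ / φ₁) * ν₂)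
    (hμ₂ : μ₂ = Real.sqrt (φ₁ / (φ₁ + φ₂) - ν₂ ^ 2))
    (hν₁ : ν₁ = Real.sqrt (φ₂ / (φ₁ + φ₂) - (φ₂ / φ₁) * ν₂ ^ 2)) :
    φ₁ * μ₁ * ν₁ + φ₂ * μ₂ * ν₂ = 0 ∧
    φ₁ * (μ₁ ^ 2 - ν₁ ^ 2) + φ₂ * (μ₂ ^ 2 - ν₂ ^ 2) = 0 ∧
    μ₁ ^ 2 + μ₂ ^ 2 + ν₁ ^ 2 + ν₂ ^ 2 = 1 := by
  set r := Real.sqrt (φ₂ / φ₁)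
  have hsum : 0 < φ₁ + φ₂ := by linarith
  have hratio : 0 ≤ φ₂ / φ₁ := div_nonneg h2 h1.le
  have hr : φ₁ * r ^ 2 = φ₂ := by rw [Real.sq_sqrt hratio]; field_simp
  have hμ₂sq : μ₂ ^ 2 = φ₁ / (φ₁ + φ₂) - ν₂ ^ 2 := by
    rw [hμ₂, Real.sq_sqrt (sub_nonneg.mpr hν₂)]
  have hν₁' : ν₁ = r * μ₂ := by
    have : φ₂ / (φ₁ + φ₂) - (φ₂ / φ₁) * ν₂ ^ 2 = (φ₂ / φ₁) * (φ₁ / (φ₁ + φ₂) - ν₂ ^ 2) := by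
      field_simp
    rw [hν₁, hμ₂, this, Real.sqrt_mul hratio]
  subst hμ₁ hν₁'
  exact ⟨scaledQuadruple_cross_eq_zero hr μ₂ ν₂, scaledQuadruple_diff_eq_zero hr μ₂ ν₂,
    scaledQuadruple_norm_eq_one hr hsum.ne' (by linarith)⟩

/-- The explicit quadruple `(μ₁, μ₂, ν₁, ν₂)` solves the system
`φ₁μ₁ν₁ + φ₂μ₂ν₂ = 0`, `φ₁(μ₁² − ν₁²) + φ₂(μ₂² − ν₂²) = 0`, `μ₁² + μ₂² + ν₁² + ν₂² = 1`. -/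
theorem stmt8 (φ₁ φ₂ ν₂ : ℝ) (h21 : φ₂ ≤ φ₁) (h2 : 0 ≤ φ₂) (h1 : 0 < φ₁)
    (hν₂ : ν₂ ^ 2 ≤ φ₁ / (φ₁ + φ₂))
    (μ₁ μ₂ ν₁ : ℝ)
    (hμ₁ : μ₁ = -Real.sqrt (φ₂ / φ₁) * ν₂)
    (hμ₂ : μ₂ = Real.sqrt (φ₁ / (φ₁ + φ₂) - ν₂ ^ 2))
    (hν₁ : ν₁ = Real.sqrt (φ₂ / (φ₁ + φ₂) - (φ₂ / φ₁) * ν₂ ^ 2)) :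
    φ₁ * μ₁ * ν₁ + φ₂ * μ₂ * ν₂ = 0 ∧
    φ₁ * (μ₁ ^ 2 - ν₁ ^ 2) + φ₂ * (μ₂ ^ 2 - ν₂ ^ 2) = 0 ∧
    μ₁ ^ 2 + μ₂ ^ 2 + ν₁ ^ 2 + ν₂ ^ 2 = 1 :=
  stmt8_general φ₁ φ₂ ν₂ h2 h1 hν₂ μ₁ μ₂ ν₁ hμ₁ hμ₂ hν₁
end

section
/- Let A ∈ ℝ^{n×n} and B ∈ ℝ^{n×m}, and suppose B = Q₁R where Q = [Q₁, Q₂] ∈ ℝ^{n×n} is orthogonal with Q₁ ∈ ℝ^{n×m}, Q₂ ∈ ℝ^{n×(n−m)}, and R ∈ ℝ^{m×m} is invertible. Let X ∈ ℝ^{n×n} be orthogonal and T ∈ ℝ^{n×n}. Then for any F ∈ ℝ^{m×n}, the equality A + BF = X T Xᵀ holds if and only if Q₂ᵀ(AX − XT) = 0 and F = R⁻¹Q₁ᵀ(X T Xᵀ − A). -/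
open Matrix

/-! Write `D = XTXᵀ - A`, so that the equation is `Q₁ R F = D`. Since `Q₁ᵀQ₁ = 1` and `Q₂ᵀQ₁ = 0`,
a solution forces `Q₂ᵀD = 0` and `F = R⁻¹Q₁ᵀD`; conversely `Q₁Q₁ᵀ + Q₂Q₂ᵀ = 1` shows that this `F`
solves the equation once `Q₂ᵀD = 0`. Finally `AX - XT = -DX` with `X` orthogonal, so
`Q₂ᵀD = 0` is equivalent to `Q₂ᵀ(AX - XT) = 0`. -/

namespace Matrix

variable {n m k p α : Type*} [Fintype n] [CommRing α]

lemma transpose_mul_self_fromCols_eq_one_iff [DecidableEq m] [DecidableEq k] {Q₁ : Matrix n m α}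
    {Q₂ : Matrix n k α} :
    (fromCols Q₁ Q₂)ᵀ * fromCols Q₁ Q₂ = 1 ↔
      Q₁ᵀ * Q₁ = 1 ∧ Q₁ᵀ * Q₂ = 0 ∧ Q₂ᵀ * Q₁ = 0 ∧ Q₂ᵀ * Q₂ = 1 := by
  rw [transpose_fromCols, fromRows_mul_fromCols, ← fromBlocks_one, fromBlocks_inj]

lemma mul_eq_zero_iff_of_transpose_mul_self_eq_one [DecidableEq n] {X : Matrix n n α}
    (hX : Xᵀ * X = 1) {M : Matrix p n α} : M * X = 0 ↔ M = 0 := by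
  refine ⟨fun h => ?_, fun h => by rw [h, Matrix.zero_mul]⟩
  rw [← Matrix.mul_one M, ← mul_eq_one_comm.mp hX, ← Matrix.mul_assoc, h, Matrix.zero_mul]

lemma mul_sub_conj_eq_zero_iff [DecidableEq n] {X : Matrix n n α} (hX : Xᵀ * X = 1)
    (P : Matrix p n α) (A T : Matrix n n α) :
    P * (A * X - X * T) = 0 ↔ P * (X * T * Xᵀ - A) = 0 := by
  have hAX : A * X - X * T = -((X * T * Xᵀ - A) * X) := by
    rw [Matrix.sub_mul, Matrix.mul_assoc (X * T), hX, Matrix.mul_one, neg_sub]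
  rw [hAX, Matrix.mul_neg, neg_eq_zero, ← Matrix.mul_assoc,
    mul_eq_zero_iff_of_transpose_mul_self_eq_one hX]

lemma mul_mul_eq_iff_of_fromCols_orthogonal [Fintype m] [Fintype k] [DecidableEq n]
    [DecidableEq m] [DecidableEq k] {Q₁ : Matrix n m α} {Q₂ : Matrix n k α}
    (hQ : (fromCols Q₁ Q₂)ᵀ * fromCols Q₁ Q₂ = 1)
    (hQ' : fromCols Q₁ Q₂ * (fromCols Q₁ Q₂)ᵀ = 1) {R : Matrix m m α} (hR : IsUnit R.det)
    (F : Matrix m p α) (D : Matrix n p α) :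
    Q₁ * R * F = D ↔ Q₂ᵀ * D = 0 ∧ F = R⁻¹ * (Q₁ᵀ * D) := by
  obtain ⟨h11, -, h21, -⟩ := transpose_mul_self_fromCols_eq_one_iff.mp hQ
  have hsum : Q₁ * Q₁ᵀ + Q₂ * Q₂ᵀ = 1 := by
    rwa [transpose_fromCols, fromCols_mul_fromRows] at hQ'
  constructor
  · rintro rfl
    refine ⟨?_, ?_⟩
    · rw [Matrix.mul_assoc Q₁, ← Matrix.mul_assoc Q₂ᵀ, h21, Matrix.zero_mul]
    · rw [Matrix.mul_assoc Q₁, ← Matrix.mul_assoc Q₁ᵀ, h11, Matrix.one_mul,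
        nonsing_inv_mul_cancel_left R F hR]
  · rintro ⟨hD, rfl⟩
    calc Q₁ * R * (R⁻¹ * (Q₁ᵀ * D)) = (Q₁ * Q₁ᵀ + Q₂ * Q₂ᵀ) * D := by
          rw [Matrix.mul_assoc, mul_nonsing_inv_cancel_left R _ hR, Matrix.add_mul,
            Matrix.mul_assoc Q₂, hD, Matrix.mul_zero, add_zero, Matrix.mul_assoc]
      _ = D := by rw [hsum, Matrix.one_mul]

end Matrix

theorem stmt9_general {n m k : ℕ}
    (A : Matrix (Fin n) (Fin n) ℝ) (B : Matrix (Fin n) (Fin m) ℝ)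
    (Q₁ : Matrix (Fin n) (Fin m) ℝ) (Q₂ : Matrix (Fin n) (Fin k) ℝ)
    (hQ : (Matrix.fromCols Q₁ Q₂)ᵀ * Matrix.fromCols Q₁ Q₂ = 1)
    (hQ' : Matrix.fromCols Q₁ Q₂ * (Matrix.fromCols Q₁ Q₂)ᵀ = 1)
    (R : Matrix (Fin m) (Fin m) ℝ) (hR : IsUnit R.det)
    (hB : B = Q₁ * R)
    (X T : Matrix (Fin n) (Fin n) ℝ) (hX : Xᵀ * X = 1) :
    ∀ F : Matrix (Fin m) (Fin n) ℝ,
      A + B * F = X * T * Xᵀ ↔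
        (Q₂ᵀ * (A * X - X * T) = 0 ∧ F = R⁻¹ * (Q₁ᵀ * (X * T * Xᵀ - A))) := by
  intro F
  rw [← eq_sub_iff_add_eq', hB, mul_mul_eq_iff_of_fromCols_orthogonal hQ hQ' hR,
    mul_sub_conj_eq_zero_iff hX]

/-- Parametrization of solutions to the pole assignment problem via the real Schur form:
with `B = Q₁R`, `Q = [Q₁, Q₂]` orthogonal and `R` invertible, and `X` orthogonal,
`A + BF = XTXᵀ` holds iff `Q₂ᵀ(AX − XT) = 0` and `F = R⁻¹Q₁ᵀ(XTXᵀ − A)`. -/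
theorem stmt9 {n m k : ℕ} (hmk : m + k = n)
    (A : Matrix (Fin n) (Fin n) ℝ) (B : Matrix (Fin n) (Fin m) ℝ)
    (Q₁ : Matrix (Fin n) (Fin m) ℝ) (Q₂ : Matrix (Fin n) (Fin k) ℝ)
    (hQ : (Matrix.fromCols Q₁ Q₂)ᵀ * Matrix.fromCols Q₁ Q₂ = 1)
    (hQ' : Matrix.fromCols Q₁ Q₂ * (Matrix.fromCols Q₁ Q₂)ᵀ = 1)
    (R : Matrix (Fin m) (Fin m) ℝ) (hR : IsUnit R.det)
    (hB : B = Q₁ * R)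
    (X T : Matrix (Fin n) (Fin n) ℝ) (hX : Xᵀ * X = 1) :
    ∀ F : Matrix (Fin m) (Fin n) ℝ,
      A + B * F = X * T * Xᵀ ↔
        (Q₂ᵀ * (A * X - X * T) = 0 ∧ F = R⁻¹ * (Q₁ᵀ * (X * T * Xᵀ - A))) :=
  stmt9_general A B Q₁ Q₂ hQ hQ' R hR hB X T hX
end

section
/- Let z ∈ ℂ^n, w ∈ ℂ^j, β ∈ ℝ, and let c, s ∈ ℝ satisfy c² + s² = 1. Define x₁ = c·Re(z) − s·Im(z), x₂ = s·Re(z) + c·Im(z), v₁ = c·Re(w) − s·Im(w), v₂ = s·Re(w) + c·Im(w), and assume x₁ ≠ 0 and x₂ ≠ 0. Let δ₁ = 1/‖x₁‖₂, δ₂ = 1/‖x₂‖₂, and C = ‖z‖₂/‖x₁‖₂. Then δ₁²‖v₁‖₂² + δ₂²‖v₂‖₂² + β²(δ₁/δ₂ − δ₂/δ₁)² = (C²/(C²−1))·‖w‖₂²/‖z‖₂² + ((C⁴ − 2C²)/(C²−1))·‖v₁‖₂²/‖z‖₂² + β²(C² − 3 + 1/(C²−1)). -/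
open Matrix

/-!
Rotating the real and imaginary parts of a complex vector by `(c, s)` with `c² + s² = 1`
preserves the sum of their squared norms, so `‖z‖² = ‖x₁‖² + ‖x₂‖²` and `‖w‖² = ‖v₁‖² + ‖v₂‖²`.
With `a = ‖x₁‖²` and `b = ‖x₂‖²` one has `δ₁² = 1/a`, `δ₂² = 1/b` and `C² = (a + b)/a`, hence
`C² − 1 = b/a`, and the identity becomes a rational-function identity in `a` and `b`.
-/

theorem Complex.re_star_mul_self_eq_rotate_sq (u : ℂ) {c s : ℝ} (hcs : c ^ 2 + s ^ 2 = 1) :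
    (star u * u).re = (c * u.re - s * u.im) ^ 2 + (s * u.re + c * u.im) ^ 2 := by
  have hnorm : (star u * u).re = u.re ^ 2 + u.im ^ 2 := by
    simp only [Complex.star_def, Complex.mul_re, Complex.conj_re, Complex.conj_im]
    ring
  rw [hnorm]
  linear_combination (-(u.re ^ 2 + u.im ^ 2)) * hcs

theorem re_star_dotProduct_self_eq_rotate {ι : Type*} [Fintype ι] (u : ι → ℂ) {c s : ℝ}
    (hcs : c ^ 2 + s ^ 2 = 1) {y₁ y₂ : ι → ℝ}
    (hy₁ : y₁ = c • (fun i => (u i).re) - s • (fun i => (u i).im))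
    (hy₂ : y₂ = s • (fun i => (u i).re) + c • (fun i => (u i).im)) :
    (star u ⬝ᵥ u).re = y₁ ⬝ᵥ y₁ + y₂ ⬝ᵥ y₂ := by
  subst hy₁ hy₂
  simp only [dotProduct, Complex.re_sum, Pi.star_apply, ← Finset.sum_add_distrib]
  refine Finset.sum_congr rfl fun i _ => ?_
  simp only [Pi.sub_apply, Pi.add_apply, Pi.smul_apply, smul_eq_mul,
    Complex.re_star_mul_self_eq_rotate_sq (u i) hcs, sq]

theorem dotProduct_self_pos_s15 {ι : Type*} [Fintype ι] {x : ι → ℝ} (hx : x ≠ 0) :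
    0 < x ⬝ᵥ x := by
  simpa using dotProduct_star_self_pos_iff.2 hx

theorem one_div_sqrt_sq {a : ℝ} (ha : 0 ≤ a) : (1 / √a) ^ 2 = 1 / a := by
  rw [div_pow, one_pow, Real.sq_sqrt ha]

theorem div_sq_sub_sq_div_sq {δ₁ δ₂ : ℝ} (h₁ : δ₁ ≠ 0) (h₂ : δ₂ ≠ 0) :
    (δ₁ / δ₂ - δ₂ / δ₁) ^ 2 = δ₁ ^ 2 / δ₂ ^ 2 + δ₂ ^ 2 / δ₁ ^ 2 - 2 := by
  field_simp
  ring

theorem rotated_objective_eq {a b p q β δ₁ δ₂ C : ℝ} (ha : 0 < a) (hb : 0 < b)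
    (hδ₁ : δ₁ ^ 2 = 1 / a) (hδ₂ : δ₂ ^ 2 = 1 / b) (hC : C ^ 2 = (a + b) / a) :
    δ₁ ^ 2 * p + δ₂ ^ 2 * q + β ^ 2 * (δ₁ / δ₂ - δ₂ / δ₁) ^ 2 =
      (C ^ 2 / (C ^ 2 - 1)) * ((p + q) / (a + b)) +
      ((C ^ 4 - 2 * C ^ 2) / (C ^ 2 - 1)) * (p / (a + b)) +
      β ^ 2 * (C ^ 2 - 3 + 1 / (C ^ 2 - 1)) := by
  have hδ₁0 : δ₁ ≠ 0 := by rintro rfl; simp [ha.ne] at hδ₁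
  have hδ₂0 : δ₂ ≠ 0 := by rintro rfl; simp [hb.ne] at hδ₂
  have hC₁ : C ^ 2 - 1 = b / a := by rw [hC]; field_simp; ring
  have hC₄ : C ^ 4 = ((a + b) / a) ^ 2 := by rw [← hC]; ring
  rw [div_sq_sub_sq_div_sq hδ₁0 hδ₂0, hδ₁, hδ₂, hC₁, hC₄, hC]
  field_simp
  ring

/-- The objective value `δ₁²‖v₁‖² + δ₂²‖v₂‖² + β²(δ₁/δ₂ − δ₂/δ₁)²` of the rotated data
equals `(C²/(C²−1))‖w‖²/‖z‖² + ((C⁴−2C²)/(C²−1))‖v₁‖²/‖z‖² + β²(C² − 3 + 1/(C²−1))`,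
where `C = ‖z‖/‖x₁‖`. -/
theorem stmt15 {n j : ℕ} (z : Fin n → ℂ) (w : Fin j → ℂ) (β c s : ℝ)
    (hcs : c ^ 2 + s ^ 2 = 1)
    (x₁ x₂ : Fin n → ℝ)
    (hx₁ : x₁ = c • (fun i => (z i).re) - s • (fun i => (z i).im))
    (hx₂ : x₂ = s • (fun i => (z i).re) + c • (fun i => (z i).im))
    (v₁ v₂ : Fin j → ℝ)
    (hv₁ : v₁ = c • (fun i => (w i).re) - s • (fun i => (w i).im))
    (hv₂ : v₂ = s • (fun i => (w i).re) + c • (fun i => (w i).im))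
    (hx₁0 : x₁ ≠ 0) (hx₂0 : x₂ ≠ 0)
    (δ₁ δ₂ C : ℝ)
    (hδ₁ : δ₁ = 1 / Real.sqrt (x₁ ⬝ᵥ x₁))
    (hδ₂ : δ₂ = 1 / Real.sqrt (x₂ ⬝ᵥ x₂))
    (hC : C = Real.sqrt ((star z ⬝ᵥ z).re) / Real.sqrt (x₁ ⬝ᵥ x₁)) :
    δ₁ ^ 2 * (v₁ ⬝ᵥ v₁) + δ₂ ^ 2 * (v₂ ⬝ᵥ v₂) + β ^ 2 * (δ₁ / δ₂ - δ₂ / δ₁) ^ 2 =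
      (C ^ 2 / (C ^ 2 - 1)) * ((star w ⬝ᵥ w).re / (star z ⬝ᵥ z).re) +
      ((C ^ 4 - 2 * C ^ 2) / (C ^ 2 - 1)) * ((v₁ ⬝ᵥ v₁) / (star z ⬝ᵥ z).re) +
      β ^ 2 * (C ^ 2 - 3 + 1 / (C ^ 2 - 1)) := by
  have hz := re_star_dotProduct_self_eq_rotate z hcs hx₁ hx₂
  have hw := re_star_dotProduct_self_eq_rotate w hcs hv₁ hv₂
  have ha := dotProduct_self_pos_s15 hx₁0
  have hb := dotProduct_self_pos_s15 hx₂0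
  rw [hz, hw]
  refine rotated_objective_eq ha hb ?_ ?_ ?_
  · rw [hδ₁, one_div_sqrt_sq ha.le]
  · rw [hδ₂, one_div_sqrt_sq hb.le]
  · rw [hC, hz, div_pow, Real.sq_sqrt (by positivity), Real.sq_sqrt ha.le]
end

section
/- Let A ∈ ℝ^{n×n} and B ∈ ℝ^{n×m} be such that the controllability matrix [B, AB, A²B, …, A^{n−1}B] ∈ ℝ^{n×nm} has rank n. Let Q₂ ∈ ℝ^{n×(n−m)} satisfy Q₂ᵀQ₂ = I_{n−m} and Q₂ᵀB = 0. Then for every λ ∈ ℂ, the matrix Q₂ᵀ(A − λI_n) ∈ ℂ^{(n−m)×n} has full row rank n − m. -/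
/-!
If `v` kills the rows of `Q₂ᵀ(A − λI)`, then `w = vQ₂ᵀ` is a left eigenvector of `A` (or zero)
with `wB = vQ₂ᵀB = 0`, so `wAᵏB = λᵏwB = 0` for every `k`: `w` kills the controllability matrix.
Its rows are linearly independent over `ℝ`, hence over `ℂ`, so `w = 0` and `v = vQ₂ᵀQ₂ = wQ₂ = 0`.
-/

open Matrix

namespace Matrix

variable {ι ι' κ R : Type*}

theorem linearIndependent_row_iff_rank_eq_card [Field R] [Fintype ι] [Fintype κ]
    {M : Matrix ι κ R} : LinearIndependent R M.row ↔ M.rank = Fintype.card ι := by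
  rw [M.rank_eq_finrank_span_row, linearIndependent_iff_card_eq_finrank_span, Set.finrank,
    eq_comm]

theorem linearIndependent_row_iff_forall_vecMul_eq_zero [CommRing R] [Fintype ι]
    {M : Matrix ι κ R} : LinearIndependent R M.row ↔ ∀ v, v ᵥ* M = 0 → v = 0 := by
  rw [Fintype.linearIndependent_iff]
  refine forall_congr' fun v => ?_
  rw [vecMul_eq_sum]
  exact ⟨fun h hv => funext (h hv), fun h hv => congrFun (h hv)⟩

theorem linearIndependent_row_map_algebraMap {S : Type*} [Finite κ] [CommRing R] [CommRing S]
    [Algebra R S] [FaithfulSMul R S] [IsDomain S] {M : Matrix ι κ R} :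
    LinearIndependent S (M.map (algebraMap R S)).row ↔ LinearIndependent R M.row :=
  linearIndependent_algebraMap_comp_iff

theorem vecMul_pow_of_vecMul_eq_smul [CommSemiring R] [Fintype ι] [DecidableEq ι]
    {A : Matrix ι ι R} {w : ι → R} {μ : R} (hA : w ᵥ* A = μ • w) (k : ℕ) :
    w ᵥ* A ^ k = μ ^ k • w := by
  induction k with
  | zero => simp
  | succ k ih => rw [pow_succ, ← vecMul_vecMul, ih, smul_vecMul, hA, smul_smul, pow_succ]

def controllabilityMatrix [Semiring R] [Fintype ι] [DecidableEq ι] (A : Matrix ι ι R)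
    (B : Matrix ι κ R) (N : ℕ) : Matrix ι (Fin N × κ) R :=
  of fun i q => (A ^ (q.1 : ℕ) * B) i q.2

section Controllability

variable [Fintype ι] [DecidableEq ι]

theorem controllabilityMatrix_map {S : Type*} [Semiring R] [Semiring S] (f : R →+* S)
    (A : Matrix ι ι R) (B : Matrix ι κ R) (N : ℕ) :
    (controllabilityMatrix A B N).map f = controllabilityMatrix (A.map f) (B.map f) N := by
  ext i q
  simp only [controllabilityMatrix, map_apply, of_apply, ← RingHom.mapMatrix_apply, ← map_pow]
  rw [RingHom.mapMatrix_apply, ← Matrix.map_mul, map_apply]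

theorem vecMul_controllabilityMatrix_eq_zero [CommSemiring R] {A : Matrix ι ι R}
    {B : Matrix ι κ R} {w : ι → R} {μ : R} (hA : w ᵥ* A = μ • w) (hB : w ᵥ* B = 0) (N : ℕ) :
    w ᵥ* controllabilityMatrix A B N = 0 := by
  ext q
  change (w ᵥ* (A ^ (q.1 : ℕ) * B)) q.2 = 0
  rw [← vecMul_vecMul, vecMul_pow_of_vecMul_eq_smul hA, smul_vecMul, hB, smul_zero,
    Pi.zero_apply]

variable [CommRing R] {A : Matrix ι ι R} {B : Matrix ι κ R} {N : ℕ}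

theorem eq_zero_of_linearIndependent_controllabilityMatrix
    (hC : LinearIndependent R (controllabilityMatrix A B N).row) {w : ι → R} {μ : R}
    (hA : w ᵥ* A = μ • w) (hB : w ᵥ* B = 0) : w = 0 :=
  linearIndependent_row_iff_forall_vecMul_eq_zero.mp hC w
    (vecMul_controllabilityMatrix_eq_zero hA hB N)

theorem linearIndependent_row_transpose_mul_sub_smul_one [Fintype ι'] [DecidableEq ι']
    (hC : LinearIndependent R (controllabilityMatrix A B N).row) {Q : Matrix ι ι' R}
    (hQ : Qᵀ * Q = 1) (hQB : Qᵀ * B = 0) (μ : R) :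
    LinearIndependent R (Qᵀ * (A - μ • 1)).row := by
  rw [linearIndependent_row_iff_forall_vecMul_eq_zero]
  intro v hv
  have hw : v ᵥ* Qᵀ = 0 := by
    refine eq_zero_of_linearIndependent_controllabilityMatrix hC (μ := μ) ?_ ?_
    · have h : v ᵥ* Qᵀ ᵥ* (A - μ • 1) = 0 := by rw [vecMul_vecMul, hv]
      rwa [vecMul_sub, vecMul_smul, vecMul_one, sub_eq_zero] at h
    · rw [vecMul_vecMul, hQB, vecMul_zero]
  rw [← vecMul_one v, ← hQ, ← vecMul_vecMul, hw, zero_vecMul]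

end Controllability

end Matrix

theorem stmt18_general {n m : ℕ}
    (A : Matrix (Fin n) (Fin n) ℝ) (B : Matrix (Fin n) (Fin m) ℝ)
    (hctrb : (Matrix.of fun (i : Fin n) (q : Fin n × Fin m) =>
      (A ^ (q.1 : ℕ) * B) i q.2).rank = n)
    (Q₂ : Matrix (Fin n) (Fin (n - m)) ℝ)
    (hQ₂ : Q₂ᵀ * Q₂ = 1) (hQB : Q₂ᵀ * B = 0) :
    ∀ lam : ℂ,
      ((Q₂.map Complex.ofReal)ᵀ *
        (A.map Complex.ofReal - lam • (1 : Matrix (Fin n) (Fin n) ℂ))).rank = n - m := by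
  intro lam
  have hC : LinearIndependent ℝ (controllabilityMatrix A B n).row := by
    rw [linearIndependent_row_iff_rank_eq_card, Fintype.card_fin]
    exact hctrb
  have hCℂ : LinearIndependent ℂ
      (controllabilityMatrix (A.map Complex.ofRealHom) (B.map Complex.ofRealHom) n).row := by
    rw [← controllabilityMatrix_map]
    exact linearIndependent_row_map_algebraMap.mpr hC
  have hQℂ : (Q₂.map Complex.ofRealHom)ᵀ * Q₂.map Complex.ofRealHom = 1 := by
    rw [← transpose_map, ← Matrix.map_mul, hQ₂, Matrix.map_one _ (map_zero _) (map_one _)]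
  have hQBℂ : (Q₂.map Complex.ofRealHom)ᵀ * B.map Complex.ofRealHom = 0 := by
    rw [← transpose_map, ← Matrix.map_mul, hQB, Matrix.map_zero _ (map_zero _)]
  exact (linearIndependent_row_transpose_mul_sub_smul_one hCℂ hQℂ hQBℂ lam).rank_matrix.trans
    (Fintype.card_fin _)

/-- PBH-type consequence of controllability: if the controllability matrix
`[B, AB, …, A^{n−1}B]` has rank `n`, and `Q₂` has orthonormal columns with `Q₂ᵀB = 0`,
then `Q₂ᵀ(A − λI)` has full row rank `n − m` for every `λ ∈ ℂ`. -/
theorem stmt18 {n m : ℕ} (hm : m ≤ n)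
    (A : Matrix (Fin n) (Fin n) ℝ) (B : Matrix (Fin n) (Fin m) ℝ)
    (hctrb : (Matrix.of fun (i : Fin n) (q : Fin n × Fin m) =>
      (A ^ (q.1 : ℕ) * B) i q.2).rank = n)
    (Q₂ : Matrix (Fin n) (Fin (n - m)) ℝ)
    (hQ₂ : Q₂ᵀ * Q₂ = 1) (hQB : Q₂ᵀ * B = 0) :
    ∀ lam : ℂ,
      ((Q₂.map Complex.ofReal)ᵀ *
        (A.map Complex.ofReal - lam • (1 : Matrix (Fin n) (Fin n) ℂ))).rank = n - m :=
  stmt18_general A B hctrb Q₂ hQ₂ hQB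
end
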